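/- For every fixed real q > 1, each of the functions B_1(q,d_o,d_u) = −(1/(q−1))·(1−d_o^{1−q})·(2−d_o^{1−q}−d_u^{1−q}), B_{21}(q,d_o,d_u) = −(1/(q−1))·(11 + d_u^{3−3q} + 6d_o^{2−2q} + 3d_o^{1−q}d_u^{1−q} − 6d_u^{1−q} − 15d_o^{1−q}), B_{22}(q,d_o,d_u) = −(1/(q−1))·(10 + d_o^{1−q}d_u^{3−3q} + 5d_o^{2−2q} + 2d_o^{1−q}d_u^{1−q} − 5d_u^{1−q} − 13d_o^{1−q}) and B_3(q,d_o,d_u) = −(1/(q−1))·(6 + d_o^{1−q}d_u^{2−2q} + 3d_o^{2−2q} + d_o^{1−q}d_u^{1−q} − 3d_u^{1−q} − 8d_o^{1−q}), viewed as real functions of d_o and d_u on [2,∞) × [2,∞), is monotonically decreasing in d_o (for each fixed d_u ≥ 2) and monotonically decreasing in d_u (for each fixed d_o ≥ 2). -/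

import Mathlib

/-!
With `s = d_o^{1-q}` and `t = d_u^{1-q}`, each bound is `-(1/(q-1))` times a polynomial in `s` and
`t`, and `d ↦ d^{1-q}` is decreasing from `[1,∞)` onto `(0,1]`. So it suffices that each polynomial
is decreasing in each variable on the unit square; each difference quotient is an explicit
polynomial that is nonnegative there.
-/

open Set

/-- The bound `B_1(q,d_o,d_u)`. -/
noncomputable def B1 (q dO dU : ℝ) : ℝ :=
  -(1 / (q - 1)) * (1 - dO ^ (1 - q)) * (2 - dO ^ (1 - q) - dU ^ (1 - q))

/-- The bound `B_{21}(q,d_o,d_u)`. -/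
noncomputable def B21 (q dO dU : ℝ) : ℝ :=
  -(1 / (q - 1)) * (11 + dU ^ (3 - 3 * q) + 6 * dO ^ (2 - 2 * q)
    + 3 * dO ^ (1 - q) * dU ^ (1 - q) - 6 * dU ^ (1 - q) - 15 * dO ^ (1 - q))

/-- The bound `B_{22}(q,d_o,d_u)`. -/
noncomputable def B22 (q dO dU : ℝ) : ℝ :=
  -(1 / (q - 1)) * (10 + dO ^ (1 - q) * dU ^ (3 - 3 * q) + 5 * dO ^ (2 - 2 * q)
    + 2 * dO ^ (1 - q) * dU ^ (1 - q) - 5 * dU ^ (1 - q) - 13 * dO ^ (1 - q))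

/-- The bound `B_3(q,d_o,d_u)`. -/
noncomputable def B3 (q dO dU : ℝ) : ℝ :=
  -(1 / (q - 1)) * (6 + dO ^ (1 - q) * dU ^ (2 - 2 * q) + 3 * dO ^ (2 - 2 * q)
    + dO ^ (1 - q) * dU ^ (1 - q) - 3 * dU ^ (1 - q) - 8 * dO ^ (1 - q))

lemma antitoneOn_of_sub_eq_mul {f : ℝ → ℝ} {S : Set ℝ} (Q : ℝ → ℝ → ℝ)
    (hQ : ∀ a ∈ S, ∀ b ∈ S, 0 ≤ Q a b) (hf : ∀ a b, f a - f b = (b - a) * Q a b) :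
    AntitoneOn f S := fun a ha b hb hab => by
  linarith [hf a b, mul_nonneg (sub_nonneg.2 hab) (hQ a ha b hb)]

lemma rpow_one_sub_mem_Icc {q x : ℝ} (hq : 1 ≤ q) (hx : 1 ≤ x) : x ^ (1 - q) ∈ Icc (0 : ℝ) 1 :=
  ⟨Real.rpow_nonneg (by linarith) _, Real.rpow_le_one_of_one_le_of_nonpos hx (by linarith)⟩

section Reparametrization

variable {q a : ℝ} {B P : ℝ → ℝ → ℝ}

lemma antitoneOn_left_of_eq_poly (hq : 1 ≤ q) (ha : 1 ≤ a)
    (hP : ∀ t ∈ Icc (0 : ℝ) 1, AntitoneOn (fun s => P s t) (Icc 0 1))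
    (hB : ∀ x y, 0 ≤ x → 0 ≤ y → B x y = -(1 / (q - 1)) * P (x ^ (1 - q)) (y ^ (1 - q))) :
    ∀ y ∈ Ici a, AntitoneOn (fun x => B x y) (Ici a) := by
  intro y (hy : a ≤ y) x (hx : a ≤ x) x' (hx' : a ≤ x') hxx'
  have hc : -(1 / (q - 1)) ≤ 0 := neg_nonpos.2 (one_div_nonneg.2 (by linarith))
  have hrpow : x' ^ (1 - q) ≤ x ^ (1 - q) :=
    Real.rpow_le_rpow_of_nonpos (by linarith) hxx' (by linarith)
  simp only [hB x y (by linarith) (by linarith), hB x' y (by linarith) (by linarith)]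
  exact mul_le_mul_of_nonpos_left
    (hP _ (rpow_one_sub_mem_Icc hq (ha.trans hy)) (rpow_one_sub_mem_Icc hq (ha.trans hx'))
      (rpow_one_sub_mem_Icc hq (ha.trans hx)) hrpow) hc

lemma antitoneOn_right_of_eq_poly (hq : 1 ≤ q) (ha : 1 ≤ a)
    (hP : ∀ s ∈ Icc (0 : ℝ) 1, AntitoneOn (fun t => P s t) (Icc 0 1))
    (hB : ∀ x y, 0 ≤ x → 0 ≤ y → B x y = -(1 / (q - 1)) * P (x ^ (1 - q)) (y ^ (1 - q))) :
    ∀ x ∈ Ici a, AntitoneOn (fun y => B x y) (Ici a) :=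
  antitoneOn_left_of_eq_poly (B := fun y x => B x y) (P := fun t s => P s t) hq ha hP
    fun y x hy hx => hB x y hx hy

end Reparametrization

lemma rpow_mul_one_sub {x : ℝ} (hx : 0 ≤ x) (q : ℝ) (n : ℕ) :
    x ^ (n - n * q) = (x ^ (1 - q)) ^ n := by
  rw [← Real.rpow_mul_natCast hx]
  ring_nf

namespace B1

def poly (s t : ℝ) : ℝ := (1 - s) * (2 - s - t)

lemma eq_poly (q x y : ℝ) : B1 q x y = -(1 / (q - 1)) * poly (x ^ (1 - q)) (y ^ (1 - q)) := by
  rw [B1, poly, mul_assoc]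

lemma poly_antitoneOn_left : ∀ t ∈ Icc (0 : ℝ) 1, AntitoneOn (fun s => poly s t) (Icc 0 1) :=
  fun t ⟨_, ht⟩ => antitoneOn_of_sub_eq_mul (fun s s' => 3 - t - s - s')
    (fun _ ⟨_, hs⟩ _ ⟨_, hs'⟩ => by linarith) fun _ _ => by simp only [poly]; ring

lemma poly_antitoneOn_right : ∀ s ∈ Icc (0 : ℝ) 1, AntitoneOn (fun t => poly s t) (Icc 0 1) :=
  fun s ⟨_, hs⟩ => antitoneOn_of_sub_eq_mul (fun _ _ => 1 - s)
    (fun _ _ _ _ => by linarith) fun _ _ => by simp only [poly]; ring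

end B1

namespace B21

def poly (s t : ℝ) : ℝ := 11 + t ^ 3 + 6 * s ^ 2 + 3 * s * t - 6 * t - 15 * s

lemma eq_poly (q x y : ℝ) (hx : 0 ≤ x) (hy : 0 ≤ y) :
    B21 q x y = -(1 / (q - 1)) * poly (x ^ (1 - q)) (y ^ (1 - q)) := by
  have h2 := rpow_mul_one_sub hx q 2
  have h3 := rpow_mul_one_sub hy q 3
  push_cast at h2 h3
  rw [B21, poly, h2, h3]

lemma poly_antitoneOn_left : ∀ t ∈ Icc (0 : ℝ) 1, AntitoneOn (fun s => poly s t) (Icc 0 1) :=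
  fun t ⟨_, ht⟩ => antitoneOn_of_sub_eq_mul (fun s s' => 15 - 6 * (s + s') - 3 * t)
    (fun _ ⟨_, hs⟩ _ ⟨_, hs'⟩ => by linarith) fun _ _ => by simp only [poly]; ring

lemma poly_antitoneOn_right : ∀ s ∈ Icc (0 : ℝ) 1, AntitoneOn (fun t => poly s t) (Icc 0 1) :=
  fun s ⟨_, hs⟩ => antitoneOn_of_sub_eq_mul (fun t t' => 6 - 3 * s - (t ^ 2 + t * t' + t' ^ 2))
    (fun _ ⟨ht0, ht⟩ _ ⟨ht0', ht'⟩ => by nlinarith [mul_le_one₀ ht ht0' ht'])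
    fun _ _ => by simp only [poly]; ring

end B21

namespace B22

def poly (s t : ℝ) : ℝ := 10 + s * t ^ 3 + 5 * s ^ 2 + 2 * s * t - 5 * t - 13 * s

lemma eq_poly (q x y : ℝ) (hx : 0 ≤ x) (hy : 0 ≤ y) :
    B22 q x y = -(1 / (q - 1)) * poly (x ^ (1 - q)) (y ^ (1 - q)) := by
  have h2 := rpow_mul_one_sub hx q 2
  have h3 := rpow_mul_one_sub hy q 3
  push_cast at h2 h3
  rw [B22, poly, h2, h3]

lemma poly_antitoneOn_left : ∀ t ∈ Icc (0 : ℝ) 1, AntitoneOn (fun s => poly s t) (Icc 0 1) :=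
  fun t ⟨ht0, ht⟩ => antitoneOn_of_sub_eq_mul (fun s s' => 13 - t ^ 3 - 5 * (s + s') - 2 * t)
    (fun _ ⟨_, hs⟩ _ ⟨_, hs'⟩ => by nlinarith [pow_le_one₀ ht0 ht (n := 3)])
    fun _ _ => by simp only [poly]; ring

lemma poly_antitoneOn_right : ∀ s ∈ Icc (0 : ℝ) 1, AntitoneOn (fun t => poly s t) (Icc 0 1) :=
  fun s ⟨hs0, hs⟩ => antitoneOn_of_sub_eq_mul
    (fun t t' => 5 - 2 * s - s * (t ^ 2 + t * t' + t' ^ 2))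
    (fun _ ⟨ht0, ht⟩ _ ⟨ht0', ht'⟩ => by
      nlinarith [mul_le_one₀ ht ht0' ht', mul_le_one₀ ht ht0 ht, mul_le_one₀ ht' ht0' ht'])
    fun _ _ => by simp only [poly]; ring

end B22

namespace B3

def poly (s t : ℝ) : ℝ := 6 + s * t ^ 2 + 3 * s ^ 2 + s * t - 3 * t - 8 * s

lemma eq_poly (q x y : ℝ) (hx : 0 ≤ x) (hy : 0 ≤ y) :
    B3 q x y = -(1 / (q - 1)) * poly (x ^ (1 - q)) (y ^ (1 - q)) := by
  have h2x := rpow_mul_one_sub hx q 2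
  have h2y := rpow_mul_one_sub hy q 2
  push_cast at h2x h2y
  rw [B3, poly, h2x, h2y]

lemma poly_antitoneOn_left : ∀ t ∈ Icc (0 : ℝ) 1, AntitoneOn (fun s => poly s t) (Icc 0 1) :=
  fun t ⟨ht0, ht⟩ => antitoneOn_of_sub_eq_mul (fun s s' => 8 - t ^ 2 - 3 * (s + s') - t)
    (fun _ ⟨_, hs⟩ _ ⟨_, hs'⟩ => by nlinarith [mul_le_one₀ ht ht0 ht])
    fun _ _ => by simp only [poly]; ring

lemma poly_antitoneOn_right : ∀ s ∈ Icc (0 : ℝ) 1, AntitoneOn (fun t => poly s t) (Icc 0 1) :=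
  fun s ⟨hs0, hs⟩ => antitoneOn_of_sub_eq_mul (fun t t' => 3 - s * (t + t') - s)
    (fun _ ⟨_, ht⟩ _ ⟨_, ht'⟩ => by nlinarith)
    fun _ _ => by simp only [poly]; ring

end B3

/-- For every fixed `q > 1`, each of the functions `B_1`, `B_{21}`, `B_{22}` and
`B_3`, viewed as real functions of `d_o` and `d_u` on `[2,∞) × [2,∞)`, is
monotonically decreasing in `d_o` for each fixed `d_u ≥ 2`, and monotonically
decreasing in `d_u` for each fixed `d_o ≥ 2`. -/
theorem bounds_antitone (q : ℝ) (hq : 1 < q) :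
    (∀ dU ∈ Set.Ici (2 : ℝ), AntitoneOn (fun dO => B1 q dO dU) (Set.Ici 2)) ∧
    (∀ dO ∈ Set.Ici (2 : ℝ), AntitoneOn (fun dU => B1 q dO dU) (Set.Ici 2)) ∧
    (∀ dU ∈ Set.Ici (2 : ℝ), AntitoneOn (fun dO => B21 q dO dU) (Set.Ici 2)) ∧
    (∀ dO ∈ Set.Ici (2 : ℝ), AntitoneOn (fun dU => B21 q dO dU) (Set.Ici 2)) ∧
    (∀ dU ∈ Set.Ici (2 : ℝ), AntitoneOn (fun dO => B22 q dO dU) (Set.Ici 2)) ∧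
    (∀ dO ∈ Set.Ici (2 : ℝ), AntitoneOn (fun dU => B22 q dO dU) (Set.Ici 2)) ∧
    (∀ dU ∈ Set.Ici (2 : ℝ), AntitoneOn (fun dO => B3 q dO dU) (Set.Ici 2)) ∧
    (∀ dO ∈ Set.Ici (2 : ℝ), AntitoneOn (fun dU => B3 q dO dU) (Set.Ici 2)) := by
  have hB1 x y (_ : 0 ≤ x) (_ : 0 ≤ y) := B1.eq_poly q x y
  exact ⟨antitoneOn_left_of_eq_poly hq.le one_le_two B1.poly_antitoneOn_left hB1,
    antitoneOn_right_of_eq_poly hq.le one_le_two B1.poly_antitoneOn_right hB1,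
    antitoneOn_left_of_eq_poly hq.le one_le_two B21.poly_antitoneOn_left (B21.eq_poly q),
    antitoneOn_right_of_eq_poly hq.le one_le_two B21.poly_antitoneOn_right (B21.eq_poly q),
    antitoneOn_left_of_eq_poly hq.le one_le_two B22.poly_antitoneOn_left (B22.eq_poly q),
    antitoneOn_right_of_eq_poly hq.le one_le_two B22.poly_antitoneOn_right (B22.eq_poly q),
    antitoneOn_left_of_eq_poly hq.le one_le_two B3.poly_antitoneOn_left (B3.eq_poly q),
    antitoneOn_right_of_eq_poly hq.le one_le_two B3.poly_antitoneOn_right (B3.eq_poly q)⟩
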